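/- arXiv:1107.4696 — 2 statements merged into one kernel-verified Lean document; each statement's English description precedes it below -/
import Mathlib

section
/- Let A be a set of propositions and let δ := ∀ p ∈ A, ¬ p. If every member of A equals δ (i.e. A ⊆ {δ}) and δ is false, then δ is true. Consequently, contraposing: if δ is false then not every member of A equals δ. -/
theorem stmt15 (A : Set Prop) :
    ((∀ p ∈ A, p = (∀ q ∈ A, ¬ q)) → ¬ (∀ q ∈ A, ¬ q) → (∀ q ∈ A, ¬ q)) ∧
    (¬ (∀ q ∈ A, ¬ q) → ¬ (∀ p ∈ A, p = (∀ q ∈ A, ¬ q))) := by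
  constructor
  · intro h hδ q hq
    rw [h q hq]
    exact hδ
  · intro hδ h
    exact hδ fun q hq => (h q hq) ▸ hδ
end

section
/- There is no set of propositions A such that A is the singleton {δ}, where δ := ∀ p ∈ A, ¬ p. Formally: there is no A : Set Prop with (∀ q ∈ A, ¬ q) ∈ A and every p ∈ A equal to the proposition (∀ q ∈ A, ¬ q). -/
theorem stmt16 :
    ¬ ∃ A : Set Prop,
      (∀ q ∈ A, ¬ q) ∈ A ∧ ∀ p ∈ A, p = (∀ q ∈ A, ¬ q) := by
  rintro ⟨A, hmem, hall⟩
  have hδ : ¬ (∀ q ∈ A, ¬ q) := fun h => h _ hmem h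
  exact hδ (fun q hq => by rw [hall q hq]; exact hδ)
end
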